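/- arXiv:1004.4014 — 3 statements merged into one kernel-verified Lean document; each statement's English description precedes it below -/
import Mathlib

section
/- Let d ≥ 0 be even, say d = 2k, and let N^d be the normalized cardinal B-spline of degree d, i.e., N^d(x) = (1/d!) ∑_{i=0}^{d+1} (-1)^i C(d+1, i) (x-i)_+^d. Then d! · ∑_{j=-k}^{k} (-1)^j N^d(j + (d+1)/2) = E_d, the d-th Euler (secant) number. -/
/-- Truncated power: `(x)_+^d = x^d` for `x ≥ 0`, and `0` for `x < 0`. -/
noncomputable def truncPow (x : ℝ) (d : ℕ) : ℝ := if 0 ≤ x then x ^ d else 0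

/-- The normalized cardinal B-spline of degree `d` with knots `0, 1, …, d+1`. -/
noncomputable def cardB (d : ℕ) (x : ℝ) : ℝ :=
  (1 / (d.factorial : ℝ)) * ∑ i ∈ Finset.range (d + 2),
    (-1 : ℝ) ^ i * ((d + 1).choose i) * truncPow (x - i) d

/-- The n-th Euler (secant) number `E_n`, defined by `sec t = ∑ E_n t^n / n!`. -/
noncomputable def eulerNumber (n : ℕ) : ℝ := iteratedDeriv n (fun t => (Real.cos t)⁻¹) 0

/-!
Put `d = 2k`. Writing `j = m - k` and `m = i + r`, the left-hand side becomes
`(-1)^k S` with `S = ∑_{i + r ≤ d} C(d+1, i) (-1)^r (r + 1/2)^d`. The exponential sum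
`Φ w = ∑_{i + r ≤ d} C(d+1, i) (-1)^r exp ((2r+1) I w)` has `Φ^(d)(0) = (2I)^d S`. Summing the
geometric series in `-exp (2Iw)` gives `Φ w = 2^d sec w - (1 - exp (2Iw))^(d+1) sec w / 2`
near `0`; the second term vanishes to order `d + 1`, so `Φ^(d)(0) = 2^d E_d`, and
`I^d = (-1)^k` cancels the sign.
-/

open Finset Complex Filter Topology
open scoped Nat

theorem one_sub_mul_sum_choose_mul_geom_sum {R : Type*} [CommRing R] (y : R) (n : ℕ) :
    (1 - y) * ∑ i ∈ range n, (n.choose i : R) * ∑ r ∈ range (n - i), y ^ r =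
      2 ^ n - (1 + y) ^ n := by
  have hchoose : ∑ i ∈ range n, (n.choose i : R) = 2 ^ n - 1 := by
    have h := congrArg (Nat.cast : ℕ → R) (Nat.sum_range_choose n)
    push_cast at h
    rw [sum_range_succ, Nat.choose_self, Nat.cast_one] at h
    exact eq_sub_of_add_eq h
  have hbinom : ∑ i ∈ range n, (n.choose i : R) * y ^ (n - i) = (1 + y) ^ n - 1 := by
    rw [add_pow, sum_range_succ, Nat.choose_self, Nat.sub_self]
    simp only [one_pow, one_mul, pow_zero, Nat.cast_one, mul_one, mul_comm (y ^ _),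
      add_sub_cancel_right]
  calc (1 - y) * ∑ i ∈ range n, (n.choose i : R) * ∑ r ∈ range (n - i), y ^ r
      = ∑ i ∈ range n, (n.choose i : R) * (1 - y ^ (n - i)) := by
        rw [mul_sum]
        exact sum_congr rfl fun i _ => by rw [← mul_neg_geom_sum]; ring
    _ = 2 ^ n - (1 + y) ^ n := by
        simp only [mul_sub, mul_one, sum_sub_distrib, hchoose, hbinom]
        ring

theorem sum_choose_mul_sum_neg_one_pow_mul_cexp {d : ℕ} {w : ℂ} (hw : cos w ≠ 0) :
    ∑ i ∈ range (d + 1), ((d + 1).choose i : ℂ) *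
        ∑ r ∈ range (d + 1 - i), (-1) ^ r * exp (2 * I * (r + 1 / 2) * w) =
      2 ^ d * (cos w)⁻¹ - (1 - exp (2 * I * w)) ^ (d + 1) * ((cos w)⁻¹ / 2) := by
  have hsq : exp (2 * I * w) = exp (I * w) * exp (I * w) := by rw [← exp_add]; ring_nf
  have hterm (r : ℕ) :
      (-1) ^ r * exp (2 * I * (r + 1 / 2) * w) = exp (I * w) * (-exp (2 * I * w)) ^ r := by
    rw [neg_pow (exp _), ← exp_nat_mul, mul_left_comm, ← exp_add]
    ring_nf
  have hcos : 1 - -exp (2 * I * w) = 2 * exp (I * w) * cos w := by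
    have hinv : exp (I * w) * exp (-w * I) = 1 := by rw [← exp_add]; ring_nf; exact exp_zero
    rw [cos, hsq, mul_comm w I]
    linear_combination -hinv
  have key := one_sub_mul_sum_choose_mul_geom_sum (-exp (2 * I * w)) (d + 1)
  rw [hcos, ← sub_eq_add_neg] at key
  simp_rw [hterm, ← mul_sum, mul_left_comm _ (exp (I * w)), ← mul_sum]
  generalize ∑ i ∈ range (d + 1), ((d + 1).choose i : ℂ) *
    ∑ r ∈ range (d + 1 - i), (-exp (2 * I * w)) ^ r = p at key ⊢
  generalize 1 - exp (2 * I * w) = h at key ⊢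
  field_simp
  linear_combination key

theorem iteratedDeriv_pow_mul_eq_zero {𝕜 : Type*} [NontriviallyNormedField 𝕜] [CharZero 𝕜]
    [CompleteSpace 𝕜] {h g : 𝕜 → 𝕜} {x : 𝕜} (hh : AnalyticAt 𝕜 h x) (hx : h x = 0)
    (hg : AnalyticAt 𝕜 g x) {n m : ℕ} (hnm : n < m) :
    iteratedDeriv n (fun z => h z ^ m * g z) x = 0 := by
  refine (natCast_le_analyticOrderAt_iff_iteratedDeriv_eq_zero ((hh.pow m).mul hg)).1 ?_ n hnm
  have h1 : 1 ≤ analyticOrderAt h x :=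
    Order.one_le_iff_ne_zero.2 (hh.analyticOrderAt_ne_zero.2 hx)
  calc (m : ℕ∞) = m • 1 := by simp
    _ ≤ m • analyticOrderAt h x := by gcongr
    _ = analyticOrderAt (h ^ m) x := (analyticOrderAt_pow hh m).symm
    _ ≤ analyticOrderAt (h ^ m) x + analyticOrderAt g x := le_self_add
    _ = analyticOrderAt (fun z => h z ^ m * g z) x :=
        (analyticOrderAt_mul (hh.pow m) hg).symm

theorem iteratedDeriv_re_comp_ofReal {f : ℂ → ℂ} {x : ℝ} (hf : AnalyticAt ℂ f x) (n : ℕ) :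
    iteratedDeriv n (fun t : ℝ => (f t).re) x = (iteratedDeriv n f x).re := by
  induction n generalizing x with
  | zero => simp
  | succ n ih =>
    have hnear : ∀ᶠ t : ℝ in 𝓝 x, AnalyticAt ℂ f t :=
      continuous_ofReal.continuousAt.eventually hf.eventually_analyticAt
    have heq : iteratedDeriv n (fun t : ℝ => (f t).re) =ᶠ[𝓝 x]
        fun t => (iteratedDeriv n f t).re :=
      hnear.mono fun t ht => ih ht
    have hd : AnalyticAt ℂ (iteratedDeriv n f) x := by
      rw [iteratedDeriv_eq_iterate]; exact hf.iterated_deriv n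
    rw [iteratedDeriv_succ, heq.deriv_eq, iteratedDeriv_succ]
    exact hd.differentiableAt.hasDerivAt.real_of_complex.deriv

theorem analyticAt_sec_zero : AnalyticAt ℂ (fun w => (cos w)⁻¹) 0 :=
  analyticAt_cos.inv (by simp)

theorem eulerNumber_eq_re_iteratedDeriv (n : ℕ) :
    eulerNumber n = (iteratedDeriv n (fun w : ℂ => (cos w)⁻¹) 0).re := by
  have hsec : (fun t : ℝ => (Real.cos t)⁻¹) = fun t : ℝ => ((cos (t : ℂ))⁻¹).re := by
    funext t
    rw [← ofReal_cos, ← ofReal_inv, ofReal_re]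
  have h := iteratedDeriv_re_comp_ofReal (f := fun w => (cos w)⁻¹) (x := 0)
    (by simpa using analyticAt_sec_zero) n
  rw [ofReal_zero] at h
  rw [eulerNumber, hsec, h]

theorem I_pow_mul_sum_choose_mul_sum_eq_iteratedDeriv_sec (d : ℕ) :
    I ^ d * ∑ i ∈ range (d + 1), ((d + 1).choose i : ℂ) *
        ∑ r ∈ range (d + 1 - i), (-1) ^ r * ((r : ℂ) + 1 / 2) ^ d =
      iteratedDeriv d (fun w => (cos w)⁻¹) 0 := by
  have hev : (fun w => ∑ i ∈ range (d + 1), ((d + 1).choose i : ℂ) *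
        ∑ r ∈ range (d + 1 - i), (-1) ^ r * exp (2 * I * (r + 1 / 2) * w)) =ᶠ[𝓝 0]
      fun w => 2 ^ d * (cos w)⁻¹ - (1 - exp (2 * I * w)) ^ (d + 1) * ((cos w)⁻¹ / 2) :=
    (continuous_cos.continuousAt.eventually_ne (by simp)).mono
      fun w hw => sum_choose_mul_sum_neg_one_pow_mul_cexp hw
  have hsum : iteratedDeriv d (fun w => ∑ i ∈ range (d + 1), ((d + 1).choose i : ℂ) *
        ∑ r ∈ range (d + 1 - i), (-1) ^ r * exp (2 * I * (r + 1 / 2) * w)) 0 =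
      2 ^ d * (I ^ d * ∑ i ∈ range (d + 1), ((d + 1).choose i : ℂ) *
        ∑ r ∈ range (d + 1 - i), (-1) ^ r * ((r : ℂ) + 1 / 2) ^ d) := by
    simp (disch := fun_prop) only [iteratedDeriv_fun_sum, iteratedDeriv_const_mul,
      iteratedDeriv_cexp_const_mul]
    simp only [mul_zero, exp_zero, mul_one, mul_sum]
    refine sum_congr rfl fun i _ => sum_congr rfl fun r _ => by rw [mul_pow, mul_pow]; ring
  have hsec := analyticAt_sec_zero
  have hpow : AnalyticAt ℂ (fun w => (1 - exp (2 * I * w)) ^ (d + 1)) 0 := by fun_prop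
  have hvanish : iteratedDeriv d (fun w => (1 - exp (2 * I * w)) ^ (d + 1) * ((cos w)⁻¹ / 2)) 0
      = 0 :=
    iteratedDeriv_pow_mul_eq_zero (by fun_prop) (by simp) hsec.div_const (Nat.lt_succ_self d)
  rw [← mul_right_inj' (pow_ne_zero d (two_ne_zero' ℂ)), ← hsum, hev.iteratedDeriv_eq,
    iteratedDeriv_fun_sub (analyticAt_const.fun_mul hsec).contDiffAt
      (hpow.fun_mul hsec.div_const).contDiffAt, hvanish, sub_zero,
    iteratedDeriv_const_mul _ hsec.contDiffAt]

theorem sum_Icc_neg_eq_sum_range {M : Type*} [AddCommMonoid M] (k : ℕ) (f : ℤ → M) :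
    ∑ j ∈ Icc (-(k : ℤ)) k, f j = ∑ m ∈ range (2 * k + 1), f (m - k) := by
  symm
  refine sum_nbij' (fun m => (m : ℤ) - k) (fun j => (j + k).toNat) ?_ ?_ ?_ ?_ ?_ <;>
    intros <;> simp_all <;> omega

theorem factorial_mul_cardB_natCast_add_half {d m : ℕ} (hm : m ≤ d + 1) :
    (d ! : ℝ) * cardB d (m + 1 / 2) =
      ∑ i ∈ range (m + 1),
        (-1) ^ i * ((d + 1).choose i : ℝ) * (((m - i : ℕ) : ℝ) + 1 / 2) ^ d := by
  rw [cardB, ← mul_assoc, mul_one_div_cancel (by positivity), one_mul,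
    ← sum_subset (range_subset_range.2 (by omega : m + 1 ≤ d + 2))]
  · refine sum_congr rfl fun i hi => ?_
    have hi : i ≤ m := Nat.lt_succ_iff.1 (mem_range.1 hi)
    rw [truncPow, if_pos (by linarith [(Nat.cast_le (α := ℝ)).2 hi]), Nat.cast_sub hi]
    ring_nf
  · intro i _ hi
    have hi : (m : ℝ) + 1 ≤ i := by exact_mod_cast not_lt.1 (mt mem_range.2 hi)
    rw [truncPow, if_neg (by linarith), mul_zero]

theorem factorial_mul_sum_Icc_neg_one_zpow_mul_cardB (k : ℕ) :
    ((2 * k) ! : ℝ) * ∑ j ∈ Icc (-(k : ℤ)) k,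
        (-1 : ℝ) ^ j * cardB (2 * k) (j + (((2 * k : ℕ) : ℝ) + 1) / 2) =
      (-1) ^ k * ∑ i ∈ range (2 * k + 1), ((2 * k + 1).choose i : ℝ) *
        ∑ r ∈ range (2 * k + 1 - i), (-1) ^ r * ((r : ℝ) + 1 / 2) ^ (2 * k) := by
  calc _ = ∑ m ∈ range (2 * k + 1), ∑ i ∈ range (m + 1), (-1) ^ k * (((2 * k + 1).choose i : ℝ) *
          ((-1) ^ (m - i) * (((m - i : ℕ) : ℝ) + 1 / 2) ^ (2 * k))) := by
        rw [sum_Icc_neg_eq_sum_range, mul_sum]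
        refine sum_congr rfl fun m hm => ?_
        have harg : (((m : ℤ) - k : ℤ) : ℝ) + (((2 * k : ℕ) : ℝ) + 1) / 2 = m + 1 / 2 := by
          push_cast
          ring
        have hsign : (-1 : ℝ) ^ ((m : ℤ) - k) = (-1) ^ k * (-1) ^ m := by
          rw [zpow_sub₀ (by norm_num), zpow_natCast, zpow_natCast, div_eq_mul_inv, ← inv_pow,
            inv_neg_one, mul_comm]
        rw [harg, hsign, mul_left_comm, mul_assoc,
          factorial_mul_cardB_natCast_add_half (by linarith [mem_range.1 hm]), mul_sum,
          mul_sum]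
        refine sum_congr rfl fun i hi => ?_
        have hsq : (-1 : ℝ) ^ i * (-1) ^ i = 1 := by rw [← mul_pow]; norm_num
        rw [← Nat.sub_add_cancel (Nat.lt_succ_iff.1 (mem_range.1 hi)), pow_add,
          Nat.add_sub_cancel]
        linear_combination (-1 : ℝ) ^ k * (-1) ^ (m - i) * ((2 * k + 1).choose i : ℝ) *
          (((m - i : ℕ) : ℝ) + 1 / 2) ^ (2 * k) * hsq
    _ = _ := by
        rw [sum_range_diag_flip (f := fun i r => (-1 : ℝ) ^ k *
          (((2 * k + 1).choose i : ℝ) * ((-1) ^ r * ((r : ℝ) + 1 / 2) ^ (2 * k))))]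
        simp only [mul_sum]

theorem alternating_sum_cardB_even (k d : ℕ) (hd : d = 2 * k) :
    (d.factorial : ℝ) *
      ∑ j ∈ Finset.Icc (-(k : ℤ)) (k : ℤ),
        (-1 : ℝ) ^ j * cardB d ((j : ℝ) + ((d : ℝ) + 1) / 2) =
    eulerNumber d := by
  subst hd
  rw [factorial_mul_sum_Icc_neg_one_zpow_mul_cardB, eulerNumber_eq_re_iteratedDeriv,
    ← I_pow_mul_sum_choose_mul_sum_eq_iteratedDeriv_sec, pow_mul, I_sq]
  symm
  convert ofReal_re _ using 2
  push_cast
  rfl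
end

section
/- Let m be a prime number and C a circulant matrix of order m with rational entries (symbol c_0, ..., c_{m-1}). Then det C = 0 if and only if ∑_{j=0}^{m-1} c_j = 0 or all the c_j are equal. -/
def zmodFinEquiv (m : ℕ) [NeZero m] : ZMod m ≃ Fin m where
  toFun a := ⟨a.val, ZMod.val_lt a⟩
  invFun i := ((i : ℕ) : ZMod m)
  left_inv a := ZMod.natCast_rightInverse a
  right_inv i := by
    ext
    exact ZMod.val_cast_of_lt i.isLt

lemma sum_zmod_val {M : Type*} [AddCommMonoid M] (m : ℕ) [NeZero m] (f : ℕ → M) :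
    ∑ t : ZMod m, f t.val = ∑ i ∈ Finset.range m, f i := by
  rw [← Fin.sum_univ_eq_sum_range]
  exact (Fintype.sum_bijective (zmodFinEquiv m) (zmodFinEquiv m).bijective _ _
    (fun t => rfl))

open Polynomial in
lemma circulant_key {m : ℕ} (hm : Nat.Prime m) [NeZero m] {ξ : ℂ} (hξ : IsPrimitiveRoot ξ m)
    (c : ZMod m → ℚ) :
    (∑ t : ZMod m, (c t : ℂ) * ξ ^ t.val) = 0 ↔ ∀ i j : ZMod m, c i = c j := by
  have hfact : Fact m.Prime := ⟨hm⟩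
  set q : ℚ[X] := ∑ t : ZMod m, Polynomial.C (c t) * X ^ t.val with hq
  have haev : (Polynomial.aeval ξ) q = ∑ t : ZMod m, (c t : ℂ) * ξ ^ t.val := by
    simp [hq]
  have hcoeff : ∀ j : ℕ, j < m → q.coeff j = c ((j : ZMod m)) := by
    intro j hj
    rw [hq, Polynomial.finset_sum_coeff]
    rw [Finset.sum_eq_single ((j : ZMod m))]
    · simp [Polynomial.coeff_C_mul, Polynomial.coeff_X_pow, ZMod.val_cast_of_lt hj]
    · intro t _ ht
      have hne : j ≠ t.val := by
        intro h
        exact ht (by rw [h, ZMod.natCast_rightInverse t])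
      simp [Polynomial.coeff_C_mul, Polynomial.coeff_X_pow, hne]
    · simp
  have hdegq : q.natDegree ≤ m - 1 := by
    apply Polynomial.natDegree_sum_le_of_forall_le
    intro t _
    exact le_trans (Polynomial.natDegree_C_mul_X_pow_le _ _)
      (Nat.le_sub_one_of_lt (ZMod.val_lt t))
  constructor
  · intro h0
    have hd : minpoly ℚ ξ ∣ q := minpoly.dvd ℚ ξ (by rw [haev]; exact h0)
    rw [← Polynomial.cyclotomic_eq_minpoly_rat hξ hm.pos] at hd
    obtain ⟨h, hqh⟩ := hd
    have hΦne : cyclotomic m ℚ ≠ 0 := cyclotomic_ne_zero m ℚ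
    have hΦdeg : (cyclotomic m ℚ).natDegree = m - 1 := by
      rw [Polynomial.natDegree_cyclotomic, Nat.totient_prime hm]
    have key : ∃ a : ℚ, ∀ t : ZMod m, c t = a := by
      by_cases hq0 : q = 0
      · refine ⟨0, fun t => ?_⟩
        have hc := hcoeff t.val (ZMod.val_lt t)
        rw [hq0] at hc
        rw [ZMod.natCast_rightInverse t] at hc
        simpa using hc.symm
      · have hh0 : h ≠ 0 := by
          intro h0'; exact hq0 (by rw [hqh, h0', mul_zero])
        have hdm : q.natDegree = (cyclotomic m ℚ).natDegree + h.natDegree := by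
          rw [hqh, Polynomial.natDegree_mul hΦne hh0]
        have hh : h.natDegree = 0 := by omega
        obtain ⟨a, ha⟩ : ∃ a, Polynomial.C a = h :=
          ⟨h.coeff 0, (Polynomial.eq_C_of_natDegree_eq_zero hh).symm⟩
        refine ⟨a, fun t => ?_⟩
        have hcj := hcoeff t.val (ZMod.val_lt t)
        rw [ZMod.natCast_rightInverse t] at hcj
        rw [← hcj, hqh, ← ha, Polynomial.coeff_mul_C]
        rw [Polynomial.cyclotomic_prime, Polynomial.finset_sum_coeff]
        simp only [Polynomial.coeff_X_pow]
        rw [Finset.sum_ite_eq (Finset.range m) t.val (fun _ => (1 : ℚ))]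
        simp [Finset.mem_range.mpr (ZMod.val_lt t)]
    obtain ⟨a, ha⟩ := key
    intro i j; rw [ha i, ha j]
  · intro hall
    have ha : ∀ t : ZMod m, c t = c 0 := fun t => hall t 0
    have hrw : ∑ t : ZMod m, (c t : ℂ) * ξ ^ t.val = (c 0 : ℂ) * ∑ t : ZMod m, ξ ^ t.val := by
      rw [Finset.mul_sum]
      exact Finset.sum_congr rfl (fun t _ => by rw [ha t])
    rw [hrw, sum_zmod_val m (fun i => ξ ^ i), hξ.geom_sum_eq_zero hm.one_lt, mul_zero]

theorem circulant_det_zero_iff_prime (m : ℕ) (hm : Nat.Prime m) [NeZero m]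
    (c : ZMod m → ℚ) (C : Matrix (ZMod m) (ZMod m) ℚ)
    (hC : ∀ j k : ZMod m, C j k = c (k - j)) :
    C.det = 0 ↔ (∑ j : ZMod m, c j = 0 ∨ ∀ i j : ZMod m, c i = c j) := by
  have hm1 : 1 < m := hm.one_lt
  have hfact1 : Fact (1 < m) := ⟨hm1⟩
  set ζ : ℂ := Complex.exp (2 * Real.pi * Complex.I / m) with hζdef
  have hζ : IsPrimitiveRoot ζ m := Complex.isPrimitiveRoot_exp m (NeZero.ne m)
  have hord : m = orderOf ζ := hζ.eq_orderOf
  have hmod : ∀ n : ℕ, ζ ^ n = ζ ^ (n % m) := by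
    intro n
    conv_lhs => rw [← Nat.div_add_mod n m]
    rw [pow_add, pow_mul, hζ.pow_eq_one, one_pow, one_mul]
  have hpow : ∀ a b : ℕ, a ≡ b [MOD m] → ζ ^ a = ζ ^ b := by
    intro a b hab
    rw [hmod a, hmod b]
    exact congrArg (ζ ^ ·) hab
  set lam : ZMod m → ℂ := fun k => ∑ t : ZMod m, (c t : ℂ) * ζ ^ (t.val * k.val) with hlam
  set F : Matrix (ZMod m) (ZMod m) ℂ := Matrix.of fun j k => ζ ^ (j.val * k.val) with hF
  -- F is a Vandermonde matrix, hence invertible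
  have hFdet : F.det ≠ 0 := by
    have hFeq : F = (Matrix.vandermonde (fun i : Fin m => ζ ^ (i : ℕ))).submatrix
        (zmodFinEquiv m) (zmodFinEquiv m) := by
      ext j k
      simp only [hF, Matrix.of_apply, Matrix.submatrix_apply, Matrix.vandermonde]
      rw [← pow_mul]
      rfl
    rw [hFeq, Matrix.det_submatrix_equiv_self, Matrix.det_vandermonde]
    rw [Finset.prod_ne_zero_iff]
    intro i _
    rw [Finset.prod_ne_zero_iff]
    intro j hj
    have hij : i < j := Finset.mem_Ioi.mp hj
    intro hzero
    have heq : ζ ^ (j : ℕ) = ζ ^ (i : ℕ) := by linear_combination hzero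
    exact absurd (hζ.pow_inj j.isLt i.isLt heq) (by omega)
  -- the key commutation relation
  have hcomm : (C.map (Rat.castHom ℂ)) * F = F * Matrix.diagonal lam := by
    ext j k
    rw [Matrix.mul_diagonal, Matrix.mul_apply]
    have hterm : ∀ l : ZMod m, (C.map (Rat.castHom ℂ)) j l * F l k
        = (c (l - j) : ℂ) * ζ ^ (l.val * k.val) := by
      intro l
      simp [Matrix.map_apply, hC, hF]
    simp only [hterm]
    rw [← Equiv.sum_comp (Equiv.addLeft j) (fun l => (c (l - j) : ℂ) * ζ ^ (l.val * k.val))]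
    have hterm2 : ∀ t : ZMod m, (c ((Equiv.addLeft j) t - j) : ℂ) * ζ ^ (((Equiv.addLeft j) t).val * k.val)
        = ζ ^ (j.val * k.val) * ((c t : ℂ) * ζ ^ (t.val * k.val)) := by
      intro t
      have h1 : (Equiv.addLeft j) t - j = t := by
        simp only [Equiv.coe_addLeft]
        exact add_sub_cancel_left j t
      have h2 : ζ ^ (((Equiv.addLeft j) t).val * k.val)
          = ζ ^ (j.val * k.val) * ζ ^ (t.val * k.val) := by
        rw [← pow_add]
        apply hpow
        have : ((Equiv.addLeft j) t).val = (j.val + t.val) % m := by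
          simpa [Equiv.addLeft] using ZMod.val_add j t
        rw [this, ← add_mul]
        exact Nat.ModEq.mul_right k.val (Nat.mod_modEq _ m)
      rw [h1, h2]
      ring
    rw [Finset.sum_congr rfl (fun t _ => hterm2 t), ← Finset.mul_sum]
    simp [hF, hlam]
  -- determinant identity
  have hdet : (C.det : ℂ) = ∏ k : ZMod m, lam k := by
    have := congrArg Matrix.det hcomm
    rw [Matrix.det_mul, Matrix.det_mul, Matrix.det_diagonal,
      ← RingHom.mapMatrix_apply, ← RingHom.map_det] at this
    have h2 : (C.det : ℂ) * F.det = (∏ k : ZMod m, lam k) * F.det := by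
      rw [show ((C.det : ℂ)) = (Rat.castHom ℂ) C.det from rfl, this]; ring
    exact mul_right_cancel₀ hFdet h2
  have hzero_iff : C.det = 0 ↔ ∃ k : ZMod m, lam k = 0 := by
    constructor
    · intro h
      have : (∏ k : ZMod m, lam k) = 0 := by rw [← hdet, h]; norm_num
      obtain ⟨k, _, hk⟩ := Finset.prod_eq_zero_iff.mp this
      exact ⟨k, hk⟩
    · intro ⟨k, hk⟩
      have : (C.det : ℂ) = 0 := by
        rw [hdet]
        exact Finset.prod_eq_zero (Finset.mem_univ k) hk
      exact_mod_cast this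
  rw [hzero_iff]
  constructor
  · rintro ⟨k, hk⟩
    by_cases hk0 : k = 0
    · left
      rw [hlam] at hk
      simp only [hk0, ZMod.val_zero, Nat.mul_zero, pow_zero, mul_one] at hk
      exact_mod_cast hk
    · right
      have hval : 0 < k.val := ZMod.val_pos.mpr hk0
      have hcop : (k.val).Coprime m :=
        ((Nat.Prime.coprime_iff_not_dvd hm).mpr
          (Nat.not_dvd_of_pos_of_lt hval (ZMod.val_lt k))).symm
      have hξ : IsPrimitiveRoot (ζ ^ k.val) m := (hζ.pow_iff_coprime hm.pos k.val).mpr hcop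
      apply (circulant_key hm hξ c).mp
      rw [hlam] at hk
      rw [← hk]
      apply Finset.sum_congr rfl
      intro t _
      rw [← pow_mul, mul_comm t.val k.val]
  · intro hor
    rcases hor with hs | hall
    · refine ⟨0, ?_⟩
      rw [hlam]
      simp only [ZMod.val_zero, Nat.mul_zero, pow_zero, mul_one]
      exact_mod_cast hs
    · refine ⟨1, ?_⟩
      have h1 : (1 : ZMod m).val = 1 := ZMod.val_one m
      rw [hlam]
      have := (circulant_key hm hζ c).mpr hall
      rw [← this]
      apply Finset.sum_congr rfl
      intro t _
      rw [h1, mul_one]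
end

section
/- Let (a_n) be a convex sequence of reals (Δ²a_n = a_n - 2a_{n+1} + a_{n+2} ≥ 0 for all n) with a_n → 0. Then for every x ∈ (0, 2π), the series (1/2)a_0 + ∑_{n=1}^∞ a_n cos(nx) converges and its sum is non-negative. -/
open Filter Finset Real Topology

/-!
Summing by parts twice writes the partial sums of `a 0 / 2 + ∑ aₙ cos (n x)` as
`∑ Δ²aₙ Fₙ` plus the boundary terms `Δa_N F_N + a_{N+1} D_{N+1}`, where `Dₙ` is the Dirichlet
kernel and `Fₙ = D₀ + ⋯ + Dₙ = sin² ((n + 1) x / 2) / (2 sin² (x / 2))`. For `x ∈ (0, 2π)` both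
kernels are bounded and `Fₙ ≥ 0`; convexity and `aₙ → 0` give `Δ²aₙ ≥ 0` and `Δaₙ ↓ 0`. Hence the
boundary terms vanish and the partial sums converge to the sum of the nonnegative series
`∑ Δ²aₙ Fₙ`.
-/

theorem Finset.sum_range_mul_diff_by_parts {R : Type*} [CommRing R] (a B : ℕ → R) (N : ℕ) :
    ∑ n ∈ range N, a (n + 1) * (B (n + 1) - B n) =
      ∑ n ∈ range N, (a n - a (n + 1)) * B n + a N * B N - a 0 * B 0 := by
  induction N with
  | zero => simp
  | succ N ih => rw [sum_range_succ, sum_range_succ, ih]; ring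

theorem Finset.sum_Icc_one_eq_sum_range_succ {M : Type*} [AddCommMonoid M] (f : ℕ → M)
    (N : ℕ) :
    ∑ n ∈ Icc 1 N, f n = ∑ n ∈ range N, f (n + 1) := by
  rw [range_eq_Ico, sum_Ico_add' f 0 N 1]
  rfl

theorem Real.sin_add_mul_sin_sub (x y : ℝ) :
    sin (x + y) * sin (x - y) = sin x ^ 2 - sin y ^ 2 := by
  rw [sin_add, sin_sub]
  linear_combination sin x ^ 2 * sin_sq_add_cos_sq y - sin y ^ 2 * sin_sq_add_cos_sq x

noncomputable def dirichletKernel (x : ℝ) (n : ℕ) : ℝ :=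
  1 / 2 + ∑ k ∈ Icc 1 n, cos (k * x)

/-- `n + 1` times the Fejér kernel. -/
noncomputable def dirichletKernelSum (x : ℝ) (n : ℕ) : ℝ :=
  ∑ k ∈ range (n + 1), dirichletKernel x k

section Kernels

variable (x : ℝ)

@[simp]
theorem dirichletKernel_zero : dirichletKernel x 0 = 1 / 2 := by
  simp [dirichletKernel]

theorem dirichletKernel_succ (n : ℕ) :
    dirichletKernel x (n + 1) = dirichletKernel x n + cos ((n + 1 : ℕ) * x) := by
  rw [dirichletKernel, dirichletKernel, sum_Icc_succ_top (by omega), add_assoc]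

theorem dirichletKernel_succ_sub (n : ℕ) :
    dirichletKernel x (n + 1) - dirichletKernel x n = cos ((n + 1 : ℕ) * x) := by
  rw [dirichletKernel_succ, add_sub_cancel_left]

theorem dirichletKernel_mul_two_sin (n : ℕ) :
    dirichletKernel x n * (2 * sin (x / 2)) = sin ((n + 1 / 2) * x) := by
  induction n with
  | zero => simp [div_eq_inv_mul]
  | succ n ih =>
    have h₁ : ((n + 1 : ℕ) + 1 / 2) * x = (n + 1 : ℕ) * x + x / 2 := by push_cast; ring
    have h₂ : ((n : ℝ) + 1 / 2) * x = (n + 1 : ℕ) * x - x / 2 := by push_cast; ring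
    rw [h₂, sin_sub] at ih
    rw [dirichletKernel_succ, h₁, sin_add]
    linear_combination ih

@[simp]
theorem dirichletKernelSum_zero : dirichletKernelSum x 0 = 1 / 2 := by
  simp [dirichletKernelSum]

theorem dirichletKernelSum_succ (n : ℕ) :
    dirichletKernelSum x (n + 1) = dirichletKernelSum x n + dirichletKernel x (n + 1) :=
  sum_range_succ _ _

theorem dirichletKernelSum_succ_sub (n : ℕ) :
    dirichletKernelSum x (n + 1) - dirichletKernelSum x n = dirichletKernel x (n + 1) := by
  rw [dirichletKernelSum_succ, add_sub_cancel_left]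

theorem dirichletKernelSum_mul_two_sin_sq (n : ℕ) :
    dirichletKernelSum x n * (2 * sin (x / 2) ^ 2) = sin ((n + 1) * x / 2) ^ 2 := by
  induction n with
  | zero => simp
  | succ n ih =>
    have key := sin_add_mul_sin_sub ((n + 1 + 1) * x / 2) ((n + 1) * x / 2)
    rw [show (n + 1 + 1) * x / 2 + (n + 1) * x / 2 = (n + 1 + 1 / 2) * x by ring,
      show (n + 1 + 1) * x / 2 - (n + 1) * x / 2 = x / 2 by ring] at key
    have hD := dirichletKernel_mul_two_sin x (n + 1)
    push_cast at hD ⊢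
    rw [dirichletKernelSum_succ]
    linear_combination ih + sin (x / 2) * hD + key

end Kernels

section Bounds

variable {x : ℝ} (hx : sin (x / 2) ≠ 0)
include hx

theorem abs_dirichletKernel_le (n : ℕ) : |dirichletKernel x n| ≤ 1 / (2 * |sin (x / 2)|) := by
  have h2s : 2 * sin (x / 2) ≠ 0 := mul_ne_zero two_ne_zero hx
  rw [eq_div_of_mul_eq h2s (dirichletKernel_mul_two_sin x n), abs_div, abs_mul, abs_two]
  gcongr
  exact abs_sin_le_one _

theorem dirichletKernelSum_eq_div (n : ℕ) :
    dirichletKernelSum x n = sin ((n + 1) * x / 2) ^ 2 / (2 * sin (x / 2) ^ 2) :=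
  eq_div_of_mul_eq (by positivity) (dirichletKernelSum_mul_two_sin_sq x n)

theorem dirichletKernelSum_nonneg (n : ℕ) : 0 ≤ dirichletKernelSum x n := by
  rw [dirichletKernelSum_eq_div hx]
  positivity

theorem dirichletKernelSum_le (n : ℕ) : dirichletKernelSum x n ≤ 1 / (2 * sin (x / 2) ^ 2) := by
  rw [dirichletKernelSum_eq_div hx]
  gcongr
  exact sin_sq_le_one _

end Bounds

theorem sum_range_second_diff (a : ℕ → ℝ) (N : ℕ) :
    ∑ n ∈ range N, (a n - 2 * a (n + 1) + a (n + 2)) = (a 0 - a 1) - (a N - a (N + 1)) := by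
  rw [← sum_range_sub' (fun n => a n - a (n + 1))]
  exact sum_congr rfl fun n _ => by ring

theorem cos_partial_sum_succ_eq_by_parts (a : ℕ → ℝ) (x : ℝ) (N : ℕ) :
    a 0 / 2 + ∑ n ∈ Icc 1 (N + 1), a n * cos (n * x) =
      ∑ n ∈ range N, (a n - 2 * a (n + 1) + a (n + 2)) * dirichletKernelSum x n +
        (a N - a (N + 1)) * dirichletKernelSum x N + a (N + 1) * dirichletKernel x (N + 1) := by
  have h₁ := sum_range_mul_diff_by_parts a (dirichletKernel x) (N + 1)
  have h₂ := sum_range_mul_diff_by_parts (fun n => a n - a (n + 1)) (dirichletKernelSum x) N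
  simp only [dirichletKernel_succ_sub, dirichletKernelSum_succ_sub, dirichletKernel_zero,
    dirichletKernelSum_zero] at h₁ h₂
  rw [sum_range_succ' (fun n => (a n - a (n + 1)) * dirichletKernel x n),
    dirichletKernel_zero] at h₁
  have h₃ :
      ∑ n ∈ range N, (a n - a (n + 1) - (a (n + 1) - a (n + 1 + 1))) * dirichletKernelSum x n =
      ∑ n ∈ range N, (a n - 2 * a (n + 1) + a (n + 2)) * dirichletKernelSum x n :=
    sum_congr rfl fun n _ => by ring
  rw [sum_Icc_one_eq_sum_range_succ, ← h₃]
  push_cast at h₁ ⊢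
  linear_combination h₁ + h₂

section Convex

variable {a : ℕ → ℝ}

theorem antitone_sub_succ_of_convex (hconv : ∀ n, 0 ≤ a n - 2 * a (n + 1) + a (n + 2)) :
    Antitone fun n => a n - a (n + 1) :=
  antitone_nat_of_succ_le fun n => by linarith [hconv n]

theorem tendsto_sub_succ_zero (hlim : Tendsto a atTop (𝓝 0)) :
    Tendsto (fun n => a n - a (n + 1)) atTop (𝓝 0) := by
  simpa using hlim.sub (hlim.comp (tendsto_add_atTop_nat 1))

variable (hconv : ∀ n, 0 ≤ a n - 2 * a (n + 1) + a (n + 2)) (hlim : Tendsto a atTop (𝓝 0))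
include hconv hlim

theorem sub_succ_nonneg_of_convex (n : ℕ) : 0 ≤ a n - a (n + 1) :=
  (antitone_sub_succ_of_convex hconv).le_of_tendsto (tendsto_sub_succ_zero hlim) n

theorem summable_second_diff_mul_dirichletKernelSum {x : ℝ} (hx : sin (x / 2) ≠ 0) :
    Summable fun n => (a n - 2 * a (n + 1) + a (n + 2)) * dirichletKernelSum x n := by
  refine summable_of_sum_range_le (c := (a 0 - a 1) * (1 / (2 * sin (x / 2) ^ 2)))
    (fun n => mul_nonneg (hconv n) (dirichletKernelSum_nonneg hx n)) fun N => ?_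
  calc ∑ n ∈ range N, (a n - 2 * a (n + 1) + a (n + 2)) * dirichletKernelSum x n
      ≤ ∑ n ∈ range N, (a n - 2 * a (n + 1) + a (n + 2)) * (1 / (2 * sin (x / 2) ^ 2)) :=
        sum_le_sum fun n _ => mul_le_mul_of_nonneg_left (dirichletKernelSum_le hx n) (hconv n)
    _ = ((a 0 - a 1) - (a N - a (N + 1))) * (1 / (2 * sin (x / 2) ^ 2)) := by
        rw [← sum_mul, sum_range_second_diff]
    _ ≤ (a 0 - a 1) * (1 / (2 * sin (x / 2) ^ 2)) := by
        gcongr ?_ * _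
        exact sub_le_self _ (sub_succ_nonneg_of_convex hconv hlim N)

theorem tendsto_cos_partial_sum_of_convex {x : ℝ} (hx : sin (x / 2) ≠ 0) :
    Tendsto (fun N => a 0 / 2 + ∑ n ∈ Icc 1 N, a n * cos (n * x)) atTop
      (𝓝 (∑' n, (a n - 2 * a (n + 1) + a (n + 2)) * dirichletKernelSum x n)) := by
  rw [← tendsto_add_atTop_iff_nat 1]
  simp only [cos_partial_sum_succ_eq_by_parts]
  have hF := (tendsto_sub_succ_zero hlim).zero_mul_isBoundedUnder_le
    (isBoundedUnder_of ⟨_, fun n => (abs_of_nonneg (dirichletKernelSum_nonneg hx n)).trans_le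
      (dirichletKernelSum_le hx n)⟩)
  have hD := (hlim.comp (tendsto_add_atTop_nat 1)).zero_mul_isBoundedUnder_le
    (isBoundedUnder_of ⟨_, fun n => abs_dirichletKernel_le hx (n + 1)⟩)
  have hsum := (summable_second_diff_mul_dirichletKernelSum hconv hlim hx).hasSum.tendsto_sum_nat
  simpa using (hsum.add hF).add hD

end Convex

theorem convex_sequence_cosine_series_nonneg (a : ℕ → ℝ)
    (hconv : ∀ n, 0 ≤ a n - 2 * a (n + 1) + a (n + 2))
    (hlim : Filter.Tendsto a Filter.atTop (nhds 0))
    (x : ℝ) (hx : x ∈ Set.Ioo 0 (2 * Real.pi)) :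
    ∃ S : ℝ,
      Filter.Tendsto (fun N => a 0 / 2 + ∑ n ∈ Finset.Icc 1 N, a n * Real.cos (n * x))
        Filter.atTop (nhds S) ∧ 0 ≤ S := by
  have hsin : sin (x / 2) ≠ 0 :=
    (sin_pos_of_pos_of_lt_pi (by linarith [hx.1]) (by linarith [hx.2])).ne'
  exact ⟨_, tendsto_cos_partial_sum_of_convex hconv hlim hsin,
    tsum_nonneg fun n => mul_nonneg (hconv n) (dirichletKernelSum_nonneg hsin n)⟩
end
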